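/- Let n ≥ 1, θ, ν ∈ ℝ, and δ, λ > 0. Define Γ = (2λ − δ) I + δ 𝟙𝟙ᵀ, the externality e(x) = Γ x, and the Nash equilibrium map x*(p) = ((θ − ν)/(δ(n+1))) 𝟙 + Ω p with Ω = −(1/δ) I + (1/(δ(n+1))) 𝟙𝟙ᵀ. Then there exists exactly one p† ∈ ℝⁿ satisfying the fixed-point condition e(x*(p†)) = p†. -/

import Mathlib

/-!
Writing `x*(p) = c 𝟙 + Ω p`, the fixed-point condition reads `(I − ΓΩ) p = c Γ 𝟙`, so it has
exactly one solution as soon as `I − ΓΩ` is invertible. Both `Γ` and `Ω` lie in the commutative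
algebra spanned by `I` and `J = 𝟙𝟙ᵀ`, in which `J² = n J`. There `a I + b J` is invertible
whenever `a ≠ 0` and `a + b n ≠ 0`, with inverse `a⁻¹ I − b/(a(a + b n)) J`, and
`I − ΓΩ = (2λ/δ) I + (2(δ − λ)/(δ(n+1))) J` has `a + b n = 2(λ + nδ)/(δ(n+1)) > 0`.
-/

open Matrix

/-- The all-ones matrix `𝟙𝟙ᵀ ∈ ℝ^{n×n}`. -/
def onesMatrix (n : ℕ) : Matrix (Fin n) (Fin n) ℝ := Matrix.of fun _ _ => (1 : ℝ)

/-- The Cournot externality matrix `Γ = (2λ − δ) I + δ 𝟙𝟙ᵀ`. -/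
noncomputable def cournotGamma (n : ℕ) (δ lam : ℝ) : Matrix (Fin n) (Fin n) ℝ :=
  (2 * lam - δ) • (1 : Matrix (Fin n) (Fin n) ℝ) + δ • onesMatrix n

/-- The linear part of the Cournot Nash equilibrium map,
`Ω = −(1/δ) I + (1/(δ(n+1))) 𝟙𝟙ᵀ`. -/
noncomputable def cournotOmega (n : ℕ) (δ : ℝ) : Matrix (Fin n) (Fin n) ℝ :=
  -(1 / δ) • (1 : Matrix (Fin n) (Fin n) ℝ) + (1 / (δ * (n + 1))) • onesMatrix n

/-- The Cournot Nash equilibrium map `x*(p) = ((θ − ν)/(δ(n+1))) 𝟙 + Ω p`. -/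
noncomputable def cournotNash (n : ℕ) (θ ν δ : ℝ) (p : Fin n → ℝ) : Fin n → ℝ :=
  ((θ - ν) / (δ * (n + 1))) • (fun _ => (1 : ℝ)) + (cournotOmega n δ).mulVec p

theorem existsUnique_mulVec_add_eq_self {m R : Type*} [Fintype m] [DecidableEq m] [CommRing R]
    {A : Matrix m m R} (h : IsUnit (1 - A)) (w : m → R) : ∃! p, A *ᵥ p + w = p := by
  have hbij : Function.Bijective (1 - A).mulVec :=
    ⟨mulVec_injective_of_isUnit h, mulVec_surjective_iff_isUnit.mpr h⟩
  have hfix : ∀ p, A *ᵥ p + w = p ↔ (1 - A) *ᵥ p = w := fun p => by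
    rw [sub_mulVec, one_mulVec, sub_eq_iff_eq_add', eq_comm]
  simpa only [hfix] using hbij.existsUnique w

lemma onesMatrix_mul_onesMatrix (n : ℕ) :
    onesMatrix n * onesMatrix n = (n : ℝ) • onesMatrix n := by
  ext i j
  simp [onesMatrix, mul_apply]

lemma smul_one_add_smul_onesMatrix_mul (n : ℕ) (a b c d : ℝ) :
    (a • (1 : Matrix (Fin n) (Fin n) ℝ) + b • onesMatrix n) * (c • 1 + d • onesMatrix n) =
      (a * c) • (1 : Matrix (Fin n) (Fin n) ℝ) + (a * d + b * c + b * d * n) • onesMatrix n := by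
  simp only [add_mul, mul_add, smul_mul_assoc, mul_smul_comm, one_mul, mul_one,
    onesMatrix_mul_onesMatrix]
  module

lemma isUnit_smul_one_add_smul_onesMatrix {n : ℕ} {a b : ℝ} (ha : a ≠ 0) (hab : a + b * n ≠ 0) :
    IsUnit (a • (1 : Matrix (Fin n) (Fin n) ℝ) + b • onesMatrix n) := by
  refine isUnit_iff_exists_inv.mpr ⟨a⁻¹ • 1 + (-b / (a * (a + b * n))) • onesMatrix n, ?_⟩
  rw [smul_one_add_smul_onesMatrix_mul, mul_inv_cancel₀ ha,
    show a * (-b / (a * (a + b * n))) + b * a⁻¹ + b * (-b / (a * (a + b * n))) * n = 0 by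
      field_simp; ring, zero_smul, add_zero, one_smul]

lemma one_sub_cournotGamma_mul_cournotOmega (n : ℕ) {δ : ℝ} (hδ : δ ≠ 0) (lam : ℝ) :
    1 - cournotGamma n δ lam * cournotOmega n δ =
      (2 * lam / δ) • (1 : Matrix (Fin n) (Fin n) ℝ)
        + (2 * (δ - lam) / (δ * (n + 1))) • onesMatrix n := by
  have hn : (n : ℝ) + 1 ≠ 0 := by positivity
  rw [cournotGamma, cournotOmega, smul_one_add_smul_onesMatrix_mul]
  have h1 : (2 * lam - δ) * -(1 / δ) = 1 - 2 * lam / δ := by field_simp; ring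
  have hJ : (2 * lam - δ) * (1 / (δ * (n + 1))) + δ * -(1 / δ) + δ * (1 / (δ * (n + 1))) * n =
      -(2 * (δ - lam) / (δ * (n + 1))) := by field_simp; ring
  rw [h1, hJ]
  module

lemma isUnit_one_sub_cournotGamma_mul_cournotOmega (n : ℕ) {δ lam : ℝ} (hδ : 0 < δ)
    (hlam : 0 < lam) : IsUnit (1 - cournotGamma n δ lam * cournotOmega n δ) := by
  rw [one_sub_cournotGamma_mul_cournotOmega n hδ.ne']
  refine isUnit_smul_one_add_smul_onesMatrix (by positivity) ?_
  rw [show 2 * lam / δ + 2 * (δ - lam) / (δ * (n + 1)) * n = 2 * (lam + n * δ) / (δ * (n + 1)) by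
    field_simp; ring]
  positivity

lemma cournotGamma_mulVec_cournotNash (n : ℕ) (θ ν δ lam : ℝ) (p : Fin n → ℝ) :
    cournotGamma n δ lam *ᵥ cournotNash n θ ν δ p =
      (cournotGamma n δ lam * cournotOmega n δ) *ᵥ p
        + cournotGamma n δ lam *ᵥ (((θ - ν) / (δ * (n + 1))) • fun _ => 1) := by
  rw [cournotNash, mulVec_add, mulVec_mulVec, add_comm]

theorem cournot_unique_optimal_incentive_general
    (n : ℕ) (θ ν δ lam : ℝ) (hδ : 0 < δ) (hlam : 0 < lam) :
    ∃! pdag : Fin n → ℝ,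
      (cournotGamma n δ lam).mulVec (cournotNash n θ ν δ pdag) = pdag := by
  simpa only [cournotGamma_mulVec_cournotNash] using
    existsUnique_mulVec_add_eq_self (isUnit_one_sub_cournotGamma_mul_cournotOmega n hδ hlam) _

/-- existence-and-uniqueness part of Proposition 4:
with externality `e(x) = Γx` and equilibrium map `x*(p)`, there exists exactly one
incentive `p†` satisfying `e(x*(p†)) = p†`. -/
theorem cournot_unique_optimal_incentive
    (n : ℕ) (hn : 1 ≤ n) (θ ν δ lam : ℝ) (hδ : 0 < δ) (hlam : 0 < lam) :
    ∃! pdag : Fin n → ℝ,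
      (cournotGamma n δ lam).mulVec (cournotNash n θ ν δ pdag) = pdag :=
  cournot_unique_optimal_incentive_general n θ ν δ lam hδ hlam
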